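/- arXiv:2307.05629 — 11 statements merged into one kernel-verified Lean document; each statement's English description precedes it below -/
import Mathlib

section
/- Let K ⊆ Φ₀ be consistent and deductively closed and let ÷ be a full-domain contraction function on K satisfying the AGM postulates (K−1)–(K−6). Then for every φ ∈ Φ₀, K ÷ φ = K ∩ Cn((K ÷ φ) ∪ {¬φ}). -/
/-- Boolean propositional formulas over countably many atoms. -/
inductive Fm where
  | atom : ℕ → Fm
  | neg  : Fm → Fm
  | disj : Fm → Fm → Fm

namespace Fm

def imp (φ ψ : Fm) : Fm := disj (neg φ) ψ
def conj (φ ψ : Fm) : Fm := neg (disj (neg φ) (neg ψ))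
def biimp (φ ψ : Fm) : Fm := conj (imp φ ψ) (imp ψ φ)

def eval (v : ℕ → Bool) : Fm → Bool
  | atom n => v n
  | neg φ => !(eval v φ)
  | disj φ ψ => eval v φ || eval v ψ

def Taut (φ : Fm) : Prop := ∀ v : ℕ → Bool, eval v φ = true

end Fm

/-- Classical propositional consequence: ψ ∈ Cn K iff some finite list of members
of K has ψ as a tautological consequence. -/
def Cn (K : Set Fm) : Set Fm :=
  {ψ | ∃ l : List Fm, (∀ φ ∈ l, φ ∈ K) ∧
    ∀ v : ℕ → Bool, (∀ φ ∈ l, Fm.eval v φ = true) → Fm.eval v ψ = true}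

def Consistent (A : Set Fm) : Prop := Cn A ≠ Set.univ


open Classical in
lemma ded {A : Set Fm} {χ ψ : Fm} (h : ψ ∈ Cn (A ∪ {χ})) : Fm.imp χ ψ ∈ Cn A := by
  obtain ⟨l, hl, hv⟩ := h
  refine ⟨l.filter (fun φ => decide (φ ∈ A)), ?_, ?_⟩
  · intro φ hφ
    have := List.of_mem_filter hφ
    simpa using this
  · intro v hsat
    simp only [Fm.imp, Fm.eval, Bool.or_eq_true, Bool.not_eq_true']
    by_cases hχ : Fm.eval v χ = true
    · right
      apply hv
      intro φ hφ
      rcases hl φ hφ with hA | hc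
      · exact hsat φ (List.mem_filter.mpr ⟨hφ, by simpa using hA⟩)
      · simp at hc; subst hc; exact hχ
    · left; simpa using hχ

lemma combine {A : Set Fm} {a b ψ : Fm} (ha : a ∈ Cn A) (hb : b ∈ Cn A)
    (h : ∀ v, Fm.eval v a = true → Fm.eval v b = true → Fm.eval v ψ = true) :
    ψ ∈ Cn A := by
  obtain ⟨l₁, hl₁, hv₁⟩ := ha
  obtain ⟨l₂, hl₂, hv₂⟩ := hb
  refine ⟨l₁ ++ l₂, ?_, ?_⟩
  · intro φ hφ; rcases List.mem_append.mp hφ with h' | h'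
    · exact hl₁ φ h'
    · exact hl₂ φ h'
  · intro v hsat
    exact h v (hv₁ v fun φ hφ => hsat φ (List.mem_append.mpr (Or.inl hφ)))
      (hv₂ v fun φ hφ => hsat φ (List.mem_append.mpr (Or.inr hφ)))

/-- K ÷ φ = K ∩ Cn((K÷φ) ∪ {¬φ}) under (K−1)–(K−6). -/
theorem div_eq_inter (K : Set Fm) (hcons : Consistent K) (hclosed : K = Cn K)
    (div : Fm → Set Fm)
    (h1 : ∀ φ : Fm, div φ = Cn (div φ))
    (h2 : ∀ φ : Fm, div φ ⊆ K)
    (h3 : ∀ φ : Fm, φ ∉ K → K ⊆ div φ)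
    (h4 : ∀ φ : Fm, ¬ Fm.Taut φ → φ ∉ div φ)
    (h5 : ∀ φ : Fm, φ ∈ K → K ⊆ Cn (div φ ∪ {φ}))
    (h6 : ∀ φ ψ : Fm, Fm.Taut (Fm.biimp φ ψ) → div φ = div ψ) :
    ∀ φ : Fm, div φ = K ∩ Cn (div φ ∪ {Fm.neg φ}) := by
  intro φ
  apply Set.eq_of_subset_of_subset
  · intro ψ hψ
    exact ⟨h2 φ hψ, ⟨[ψ], by intro x hx; simp at hx; subst hx; exact Or.inl hψ,
      fun v hs => hs ψ (by simp)⟩⟩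
  · rintro ψ ⟨hψK, hψC⟩
    by_cases hφK : φ ∈ K
    · -- ψ ∈ Cn(div φ ∪ {φ}), so φ→ψ ∈ Cn(div φ); also ¬φ→ψ ∈ Cn(div φ)
      have hA : Fm.imp φ ψ ∈ Cn (div φ) := ded (h5 φ hφK hψK)
      have hB : Fm.imp (Fm.neg φ) ψ ∈ Cn (div φ) := ded hψC
      rw [h1 φ]
      refine combine hA hB ?_
      intro v ha hb
      simp only [Fm.imp, Fm.eval, Bool.or_eq_true, Bool.not_eq_true'] at ha hb
      rcases ha with ha | ha
      · rcases hb with hb | hb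
        · simp [ha] at hb
        · exact hb
      · exact ha
    · exact h3 φ hφK hψK
end

section
/- In a model satisfying the frame conditions, the contraction defined by ψ ∈ K÷φ iff 𝓑(s@) ⊆ ‖ψ‖ and f(s,‖¬φ‖) ⊆ ‖ψ‖ for all s ∈ 𝓑(s@) satisfies Vacuity: if φ ∉ K (i.e., 𝓑(s@) ⊄ ‖φ‖) and ‖¬φ‖ ≠ ∅, then K ⊆ K÷φ. -/
/-- A model: states, actual state, serial belief relation, valuation. -/
structure Model where
  S : Type
  act : S
  B : S → Set S
  serial : ∀ s : S, (B s).Nonempty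
  V : ℕ → Set S

/-- Truth set ‖φ‖ of a Boolean formula in a model. -/
def Model.truth (M : Model) : Fm → Set M.S
  | Fm.atom n => M.V n
  | Fm.neg φ => (M.truth φ)ᶜ
  | Fm.disj φ ψ => M.truth φ ∪ M.truth ψ

/-- The selection-function frame conditions of Definition 2 (restricted to
s ∈ 𝓑(s@) and nonempty events). -/
def FrameConditions (M : Model) (f : M.S → Set M.S → Set M.S) : Prop :=
  (∀ s ∈ M.B M.act, ∀ E : Set M.S, E.Nonempty → (f s E).Nonempty ∧ f s E ⊆ E) ∧
  (∀ s ∈ M.B M.act, ∀ E : Set M.S, E.Nonempty → s ∈ E → s ∈ f s E) ∧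
  (∀ s ∈ M.B M.act, ∀ E : Set M.S, E.Nonempty → (M.B M.act ∩ E).Nonempty →
      f s E ⊆ M.B M.act ∩ E) ∧
  (∀ s ∈ M.B M.act, ∀ E F : Set M.S, E.Nonempty → f s E ∩ F ⊆ f s (E ∩ F)) ∧
  (∀ E F : Set M.S, E.Nonempty →
    {s | s ∈ M.B M.act ∧ (f s E ∩ F).Nonempty}.Nonempty →
      (∀ s ∈ M.B M.act, (f s E ∩ F).Nonempty → f s (E ∩ F) ⊆ f s E ∩ F) ∧
      (∀ s ∈ M.B M.act, ¬(f s E ∩ F).Nonempty →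
        ∃ t ∈ M.B M.act, (f t E ∩ F).Nonempty ∧ f s (E ∩ F) ⊆ f t (E ∩ F)))

/-- The semantically defined contraction: ψ ∈ K÷φ iff ψ is believed and believed
on the supposition ¬φ. -/
def semDiv (M : Model) (f : M.S → Set M.S → Set M.S) (φ : Fm) : Set Fm :=
  {ψ | M.B M.act ⊆ M.truth ψ ∧ ∀ s ∈ M.B M.act, f s (M.truth (Fm.neg φ)) ⊆ M.truth ψ}

/-- Vacuity. -/
theorem semDiv_vacuity (M : Model) (f : M.S → Set M.S → Set M.S)
    (hf : FrameConditions M f) (φ : Fm)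
    (hK : ¬ M.B M.act ⊆ M.truth φ) (hφ : (M.truth (Fm.neg φ)).Nonempty) :
    {ψ : Fm | M.B M.act ⊆ M.truth ψ} ⊆ semDiv M f φ := by
  intro ψ hψ
  refine ⟨hψ, fun s hs => ?_⟩
  obtain ⟨t, ht, htφ⟩ := Set.not_subset.mp hK
  have hne : (M.B M.act ∩ M.truth (Fm.neg φ)).Nonempty := ⟨t, ht, htφ⟩
  exact fun x hx => hψ ((hf.2.2.1 s hs _ hφ hne hx).1)
end

section
/- In a model satisfying the frame conditions, the contraction defined by ψ ∈ K÷φ iff 𝓑(s@) ⊆ ‖ψ‖ and f(s,‖¬φ‖) ⊆ ‖ψ‖ for all s ∈ 𝓑(s@) satisfies Success: if ‖¬φ‖ ≠ ∅ and φ is not a tautology, then φ ∉ K÷φ. -/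
/-- Success. -/
theorem semDiv_success (M : Model) (f : M.S → Set M.S → Set M.S)
    (hf : FrameConditions M f) (φ : Fm)
    (hφ : (M.truth (Fm.neg φ)).Nonempty) (hnt : ¬ Fm.Taut φ) :
    φ ∉ semDiv M f φ := by
  rintro ⟨-, h2⟩
  obtain ⟨s, hs⟩ := M.serial M.act
  obtain ⟨hne, hsub⟩ := hf.1 s hs _ hφ
  obtain ⟨t, ht⟩ := hne
  exact hsub ht (h2 s hs ht)
end

section
/- In a model satisfying the frame conditions, the contraction defined by ψ ∈ K÷φ iff 𝓑(s@) ⊆ ‖ψ‖ and f(s,‖¬φ‖) ⊆ ‖ψ‖ for all s ∈ 𝓑(s@) satisfies Recovery: if ‖¬φ‖ ≠ ∅ and φ ∈ K, then K ⊆ Cn((K÷φ) ∪ {φ}). -/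
/-- Recovery. -/
theorem semDiv_recovery (M : Model) (f : M.S → Set M.S → Set M.S)
    (hf : FrameConditions M f) (φ : Fm)
    (hφ : (M.truth (Fm.neg φ)).Nonempty) (hK : M.B M.act ⊆ M.truth φ) :
    {ψ : Fm | M.B M.act ⊆ M.truth ψ} ⊆ Cn (semDiv M f φ ∪ {φ}) := by
  intro ψ hψ
  refine ⟨[Fm.disj (Fm.neg φ) ψ, φ], ?_, ?_⟩
  · intro χ hχ
    simp only [List.mem_cons, List.mem_singleton] at hχ
    rcases hχ with rfl | rfl | h
    · left
      constructor
      · intro s hs; exact Or.inr (hψ hs)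
      · intro s hs x hx
        exact Or.inl ((hf.1 s hs _ hφ).2 hx)
    · right; rfl
    · exact absurd h (by simp)
  · intro v hv
    have h1 := hv (Fm.disj (Fm.neg φ) ψ) (by simp)
    have h2 := hv φ (by simp)
    simp [Fm.eval, h2] at h1 ⊢
    exact h1
end

section
/- In a model satisfying the frame conditions, the contraction defined by ψ ∈ K÷φ iff 𝓑(s@) ⊆ ‖ψ‖ and f(s,‖¬φ‖) ⊆ ‖ψ‖ for all s ∈ 𝓑(s@) satisfies Conjunctive overlap: if ‖¬φ‖ ≠ ∅ and ‖¬ψ‖ ≠ ∅ (hence ‖¬(φ∧ψ)‖ ≠ ∅), then (K÷φ) ∩ (K÷ψ) ⊆ K÷(φ∧ψ). -/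
/-- Conjunctive overlap. -/
theorem semDiv_conj_overlap (M : Model) (f : M.S → Set M.S → Set M.S)
    (hf : FrameConditions M f) (φ ψ : Fm)
    (hφ : (M.truth (Fm.neg φ)).Nonempty) (hψ : (M.truth (Fm.neg ψ)).Nonempty) :
    semDiv M f φ ∩ semDiv M f ψ ⊆ semDiv M f (Fm.conj φ ψ) := by
  rintro χ ⟨⟨hK, hφc⟩, ⟨_, hψc⟩⟩
  have hE : M.truth (Fm.neg (Fm.conj φ ψ)) = M.truth (Fm.neg φ) ∪ M.truth (Fm.neg ψ) := by
    show ((M.truth (Fm.neg φ) ∪ M.truth (Fm.neg ψ))ᶜ)ᶜ = _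
    exact compl_compl _
  refine ⟨hK, fun s hs => ?_⟩
  rw [hE]
  intro t ht
  have hsub := (hf.1 s hs _ (hφ.mono Set.subset_union_left)).2 ht
  have hint := hf.2.2.2.1 s hs
  rcases hsub with h | h
  · have : t ∈ f s (M.truth (Fm.neg φ)) := by
      have := hint (M.truth (Fm.neg φ) ∪ M.truth (Fm.neg ψ)) (M.truth (Fm.neg φ))
        (hφ.mono Set.subset_union_left) ⟨ht, h⟩
      rwa [Set.union_inter_cancel_left] at this
    exact hφc s hs this
  · have : t ∈ f s (M.truth (Fm.neg ψ)) := by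
      have := hint (M.truth (Fm.neg φ) ∪ M.truth (Fm.neg ψ)) (M.truth (Fm.neg ψ))
        (hφ.mono Set.subset_union_left) ⟨ht, h⟩
      rwa [Set.union_inter_cancel_right] at this
    exact hψc s hs this
end

section
/- In a model satisfying the frame conditions, the contraction defined by ψ ∈ K÷φ iff 𝓑(s@) ⊆ ‖ψ‖ and f(s,‖¬φ‖) ⊆ ‖ψ‖ for all s ∈ 𝓑(s@) satisfies Conjunctive inclusion: if ‖¬φ‖ ≠ ∅ and φ ∉ K÷(φ∧ψ), then K÷(φ∧ψ) ⊆ K÷φ. -/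
/-- Conjunctive inclusion. -/
theorem semDiv_conj_inclusion (M : Model) (f : M.S → Set M.S → Set M.S)
    (hf : FrameConditions M f) (φ ψ : Fm)
    (hφ : (M.truth (Fm.neg φ)).Nonempty)
    (h : φ ∉ semDiv M f (Fm.conj φ ψ)) :
    semDiv M f (Fm.conj φ ψ) ⊆ semDiv M f φ := by
  classical
  obtain ⟨hb, hsel, _, _, he⟩ := hf
  set E : Set M.S := M.truth (Fm.neg (Fm.conj φ ψ)) with hEdef
  set F : Set M.S := M.truth (Fm.neg φ) with hFdef
  have hFE : F ⊆ E := by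
    intro x hx
    simp only [hEdef, hFdef, Fm.conj, Model.truth, compl_compl] at *
    exact Or.inl hx
  have hEF : E ∩ F = F := Set.inter_eq_self_of_subset_right hFE
  have hEne : E.Nonempty := ⟨hφ.choose, hFE hφ.choose_spec⟩
  -- get a state s₀ ∈ B with f s₀ E ∩ F nonempty
  have hkey : {s | s ∈ M.B M.act ∧ (f s E ∩ F).Nonempty}.Nonempty := by
    simp only [semDiv, Set.mem_setOf_eq, not_and_or] at h
    rcases h with h | h
    · -- some s ∈ B with s ∉ ‖φ‖, i.e. s ∈ F; then s ∈ f s E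
      rw [Set.not_subset] at h
      obtain ⟨s, hsB, hsφ⟩ := h
      have hsF : s ∈ F := hsφ
      have hsE : s ∈ E := hFE hsF
      exact ⟨s, hsB, s, hsel s hsB E hEne hsE, hsF⟩
    · push_neg at h
      obtain ⟨s, hsB, hns⟩ := h
      rw [Set.not_subset] at hns
      obtain ⟨t, htf, htφ⟩ := hns
      exact ⟨s, hsB, t, htf, htφ⟩
  obtain ⟨h1, h2⟩ := he E F hEne hkey
  intro χ hχ
  obtain ⟨hχB, hχf⟩ := hχ
  refine ⟨hχB, ?_⟩
  intro s hsB
  by_cases hc : (f s E ∩ F).Nonempty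
  · have := h1 s hsB hc
    rw [hEF] at this
    exact fun x hx => hχf s hsB (this hx).1
  · obtain ⟨t, htB, htne, hsub⟩ := h2 s hsB hc
    rw [hEF] at hsub
    have := h1 t htB htne
    rw [hEF] at this
    exact fun x hx => hχf t htB (this (hsub hx)).1
end

section
/- Let ÷ satisfy AGM postulates (K−1)–(K−8) on a consistent deductively closed K. With f(s,‖φ‖) = ‖K÷¬φ‖ ∩ ‖φ‖ on the canonical space, f satisfies non-emptiness: for contingent φ (φ not a tautology and ¬φ not a tautology), ‖K÷¬φ‖ ∩ ‖φ‖ ≠ ∅. -/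
/-- The eight AGM contraction postulates. -/
structure AGM (K : Set Fm) (div : Fm → Set Fm) : Prop where
  closure : ∀ φ : Fm, div φ = Cn (div φ)
  inclusion : ∀ φ : Fm, div φ ⊆ K
  vacuity : ∀ φ : Fm, φ ∉ K → K ⊆ div φ
  success : ∀ φ : Fm, ¬ Fm.Taut φ → φ ∉ div φ
  recovery : ∀ φ : Fm, φ ∈ K → K ⊆ Cn (div φ ∪ {φ})
  extensionality : ∀ φ ψ : Fm, Fm.Taut (Fm.biimp φ ψ) → div φ = div ψ
  conjOverlap : ∀ φ ψ : Fm, div φ ∩ div ψ ⊆ div (Fm.conj φ ψ)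
  conjInclusion : ∀ φ ψ : Fm, φ ∉ div (Fm.conj φ ψ) → div (Fm.conj φ ψ) ⊆ div φ

/-- Maximally consistent set of formulas. -/
def MCS (Γ : Set Fm) : Prop :=
  Consistent Γ ∧ ∀ Δ : Set Fm, Γ ⊆ Δ → Consistent Δ → Δ = Γ

/-- The canonical state space: maximally consistent sets. -/
def CS := {Γ : Set Fm // MCS Γ}

/-- ‖φ‖ for a formula. -/
def tsF (φ : Fm) : Set CS := {s | φ ∈ s.val}

/-- ‖Ψ‖ for a set of formulas. -/
def tsS (Ψ : Set Fm) : Set CS := {s | Ψ ⊆ s.val}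

/-!
By Success, `¬φ ∉ K ÷ ¬φ`; as `K ÷ ¬φ` is deductively closed, adding `φ` to it keeps it
consistent, and Lindenbaum's lemma extends `insert φ (K ÷ ¬φ)` to a maximally consistent set,
which is a point of `‖K ÷ ¬φ‖ ∩ ‖φ‖`.
-/

def falsum : Fm := Fm.neg (Fm.disj (Fm.atom 0) (Fm.neg (Fm.atom 0)))

@[simp]
lemma Fm.eval_falsum (v : ℕ → Bool) : Fm.eval v falsum = false := by
  simp [falsum, Fm.eval]

lemma consistent_iff_falsum_notMem_cn {A : Set Fm} : Consistent A ↔ falsum ∉ Cn A := by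
  refine ⟨fun hA ⟨l, hlA, hl⟩ => hA ?_, fun h hA => h (hA ▸ trivial)⟩
  refine Set.eq_univ_of_forall fun ψ => ⟨l, hlA, fun v hv => ?_⟩
  simpa using hl v hv

lemma consistent_sUnion_of_isChain {c : Set (Set Fm)} (hc : IsChain (· ⊆ ·) c)
    (hne : c.Nonempty) (hcons : ∀ A ∈ c, Consistent A) : Consistent (⋃₀ c) := by
  rw [consistent_iff_falsum_notMem_cn]
  rintro ⟨l, hl, hfalse⟩
  obtain ⟨A, hAc, hlA⟩ := hc.directedOn.exists_mem_subset_of_finite_of_subset_sUnion hne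
    l.finite_toSet hl
  exact consistent_iff_falsum_notMem_cn.mp (hcons A hAc) ⟨l, hlA, hfalse⟩

lemma exists_mcs_superset {A : Set Fm} (hA : Consistent A) : ∃ Γ, A ⊆ Γ ∧ MCS Γ := by
  obtain ⟨Γ, hAΓ, hΓ⟩ := zorn_subset_nonempty {B | Consistent B}
    (fun c hc hchain hne => ⟨⋃₀ c, consistent_sUnion_of_isChain hchain hne hc,
      fun _ => Set.subset_sUnion_of_mem⟩) A hA
  exact ⟨Γ, hAΓ, hΓ.prop, fun Δ hΓΔ hΔ => (hΓ.eq_of_subset hΔ hΓΔ).symm⟩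

open Classical in
lemma neg_mem_cn_of_falsum_mem_cn_insert {A : Set Fm} {φ : Fm}
    (h : falsum ∈ Cn (insert φ A)) : Fm.neg φ ∈ Cn A := by
  obtain ⟨l, hl, hfalse⟩ := h
  refine ⟨l.filter (· ≠ φ), fun ψ hψ => ?_, fun v hv => ?_⟩
  · obtain ⟨hψl, hψφ⟩ := List.mem_filter.mp hψ
    exact (hl ψ hψl).resolve_left (by simpa using hψφ)
  · suffices Fm.eval v φ ≠ true by simpa [Fm.eval] using this
    intro hφ
    have hl_true : ∀ ψ ∈ l, Fm.eval v ψ = true := fun ψ hψ => by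
      by_cases hψφ : ψ = φ
      · exact hψφ ▸ hφ
      · exact hv ψ (List.mem_filter.mpr ⟨hψ, by simpa using hψφ⟩)
    simpa using hfalse v hl_true

lemma consistent_insert_of_neg_notMem {A : Set Fm} (hA : A = Cn A) {φ : Fm}
    (hφ : Fm.neg φ ∉ A) : Consistent (insert φ A) :=
  consistent_iff_falsum_notMem_cn.mpr fun h => hφ (hA ▸ neg_mem_cn_of_falsum_mem_cn_insert h)

theorem canonical_nonempty_general (K : Set Fm) (div : Fm → Set Fm) (hagm : AGM K div)
    (φ : Fm) (hcont : ¬ Fm.Taut φ ∧ ¬ Fm.Taut (Fm.neg φ)) :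
    (tsS (div (Fm.neg φ)) ∩ tsF φ).Nonempty := by
  have hcons : Consistent (insert φ (div (Fm.neg φ))) :=
    consistent_insert_of_neg_notMem (hagm.closure _) (hagm.success _ hcont.2)
  obtain ⟨Γ, hΓ, hmcs⟩ := exists_mcs_superset hcons
  exact ⟨⟨Γ, hmcs⟩, (Set.subset_insert _ _).trans hΓ, hΓ (Set.mem_insert _ _)⟩

/-- non-emptiness of the canonical selection function. -/
theorem canonical_nonempty (K : Set Fm) (hcons : Consistent K)
    (hclosed : K = Cn K) (div : Fm → Set Fm) (hagm : AGM K div)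
    (φ : Fm) (hcont : ¬ Fm.Taut φ ∧ ¬ Fm.Taut (Fm.neg φ)) :
    (tsS (div (Fm.neg φ)) ∩ tsF φ).Nonempty :=
  canonical_nonempty_general K div hagm φ hcont
end

section
/- Let ÷ satisfy AGM postulates (K−1)–(K−8) on a consistent deductively closed K. With f(s,‖φ‖) = ‖K÷¬φ‖ ∩ ‖φ‖ on the canonical space and 𝓑(s@) = ‖K‖, f satisfies Doxastic Priority 1: if ‖K‖ ∩ ‖φ‖ ≠ ∅ then ‖K÷¬φ‖ ∩ ‖φ‖ ⊆ ‖K‖ ∩ ‖φ‖. -/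
lemma mcs_inconsistent {Γ : Set Fm} {φ : Fm} (h1 : φ ∈ Γ) (h2 : Fm.neg φ ∈ Γ) :
    ¬ Consistent Γ := by
  intro hc
  apply hc
  ext ψ
  simp only [Set.mem_univ, iff_true]
  refine ⟨[φ, Fm.neg φ], ?_, ?_⟩
  · intro χ hχ
    simp only [List.mem_cons, List.not_mem_nil, or_false] at hχ
    rcases hχ with rfl | rfl <;> assumption
  · intro v hv
    have ha := hv φ (by simp)
    have hb := hv (Fm.neg φ) (by simp)
    simp [Fm.eval] at hb
    simp_all

/-- Doxastic Priority 1 of the canonical selection function. -/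
theorem canonical_doxastic_priority_1 (K : Set Fm) (hcons : Consistent K)
    (hclosed : K = Cn K) (div : Fm → Set Fm) (hagm : AGM K div)
    (φ : Fm) (h : (tsS K ∩ tsF φ).Nonempty) :
    tsS (div (Fm.neg φ)) ∩ tsF φ ⊆ tsS K ∩ tsF φ := by
  obtain ⟨s, hsK, hsφ⟩ := h
  have hnφ : Fm.neg φ ∉ K := by
    intro hmem
    have hns : Fm.neg φ ∈ s.val := hsK hmem
    have hφs : φ ∈ s.val := hsφ
    exact absurd s.prop.1 (mcs_inconsistent hφs hns)
  intro t ⟨ht1, ht2⟩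
  exact ⟨fun ψ hψ => ht1 (hagm.vacuity (Fm.neg φ) hnφ hψ), ht2⟩
end

section
/- Let ÷ satisfy AGM postulates (K−1)–(K−8) on a consistent deductively closed K. Then for all φ, ψ ∈ Φ₀: Cn((K÷¬(φ∧ψ)) ∪ {φ∧ψ}) ⊆ Cn((K÷¬φ) ∪ {φ∧ψ}). -/
/-- Combine witnessing lists: Cn is idempotent (one inclusion). -/
lemma Cn_Cn {A : Set Fm} : Cn (Cn A) ⊆ Cn A := by
  have key : ∀ l : List Fm, (∀ φ ∈ l, φ ∈ Cn A) →
      ∃ L : List Fm, (∀ φ ∈ L, φ ∈ A) ∧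
        ∀ v, (∀ φ ∈ L, Fm.eval v φ = true) → ∀ φ ∈ l, Fm.eval v φ = true := by
    intro l
    induction l with
    | nil => exact fun _ => ⟨[], by simp, by simp⟩
    | cons a t ih =>
      intro h
      obtain ⟨la, hla, hva⟩ := h a (by simp)
      obtain ⟨L, hL, hvL⟩ := ih (fun φ hφ => h φ (by simp [hφ]))
      refine ⟨la ++ L, ?_, ?_⟩
      · intro φ hφ
        rcases List.mem_append.1 hφ with h' | h'
        exacts [hla _ h', hL _ h']
      · intro v hv' φ hφ
        rcases List.mem_cons.1 hφ with rfl | h'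
        · exact hva v fun x hx => hv' x (List.mem_append_left _ hx)
        · exact hvL v (fun x hx => hv' x (List.mem_append_right _ hx)) φ h'
  rintro ψ ⟨l, hl, hv⟩
  obtain ⟨L, hL, hvL⟩ := key l hl
  exact ⟨L, hL, fun v hv' => hv v (hvL v hv')⟩

lemma mem_Cn_of_mem {A : Set Fm} {φ : Fm} (h : φ ∈ A) : φ ∈ Cn A :=
  ⟨[φ], by simp [h], by intro v hv; exact hv φ (by simp)⟩

/-- Deduction theorem (the direction we need). -/
lemma deduction {S : Set Fm} {μ χ : Fm} (h : χ ∈ Cn (S ∪ {μ})) :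
    Fm.imp μ χ ∈ Cn S := by
  obtain ⟨l, hl, hv⟩ := h
  apply Cn_Cn
  refine ⟨l.map (Fm.imp μ), ?_, ?_⟩
  · intro x hx
    obtain ⟨y, hy, rfl⟩ := List.mem_map.1 hx
    rcases hl y hy with h' | h'
    · refine ⟨[y], by simp [h'], ?_⟩
      intro v hv'
      have := hv' y (by simp)
      simp [Fm.imp, Fm.eval, this]
    · simp only [Set.mem_singleton_iff] at h'
      refine ⟨[], by simp, ?_⟩
      intro v _
      cases hμ : Fm.eval v μ <;> simp [h', Fm.imp, Fm.eval, hμ]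
  · intro v hv'
    cases hμ : Fm.eval v μ with
    | false => simp [Fm.imp, Fm.eval, hμ]
    | true =>
      have hχ : Fm.eval v χ = true := by
        apply hv v
        intro x hx
        have := hv' (Fm.imp μ x) (List.mem_map.2 ⟨x, hx, rfl⟩)
        simpa [Fm.imp, Fm.eval, hμ] using this
      simp [Fm.imp, Fm.eval, hμ, hχ]

/-- Cn((K÷¬(φ∧ψ)) ∪ {φ∧ψ}) ⊆ Cn((K÷¬φ) ∪ {φ∧ψ}). -/
theorem cn_div_subset (K : Set Fm) (hcons : Consistent K)
    (hclosed : K = Cn K) (div : Fm → Set Fm) (hagm : AGM K div) :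
    ∀ φ ψ : Fm,
      Cn (div (Fm.neg (Fm.conj φ ψ)) ∪ {Fm.conj φ ψ}) ⊆
        Cn (div (Fm.neg φ) ∪ {Fm.conj φ ψ}) := by
  intro φ ψ χ hχ
  set m : Fm := Fm.conj φ ψ with hm
  set A : Fm := Fm.neg m with hA
  set C : Fm := Fm.imp φ ψ with hC
  set δ : Fm := Fm.imp m χ with hδ
  -- ¬φ ≡ ¬(φ∧ψ) ∧ (φ→ψ)
  have hext : div (Fm.conj A C) = div (Fm.neg φ) := by
    apply hagm.extensionality
    intro v
    simp only [hm, hA, hC, Fm.biimp, Fm.conj, Fm.imp, Fm.eval]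
    cases hφ : Fm.eval v φ <;> cases hψ : Fm.eval v ψ <;> simp
  -- δ ∈ K ÷ A
  have hδA : δ ∈ div A := by
    rw [hagm.closure A]
    exact deduction hχ
  have hδK : δ ∈ K := hagm.inclusion A hδA
  -- find θ ∈ div A ∩ div C with θ, m ⊨ χ
  by_cases hCK : C ∈ K
  · -- θ = C → δ
    set θ : Fm := Fm.imp C δ with hθ
    have hθA : θ ∈ div A := by
      rw [hagm.closure A]
      refine ⟨[δ], by simp [hδA], ?_⟩
      intro v hv
      have h1 := hv δ (by simp)
      simp only [hθ, hδ, hC, hm, Fm.imp, Fm.conj, Fm.eval] at h1 ⊢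
      cases hφ : Fm.eval v φ <;> cases hψ : Fm.eval v ψ <;>
        simp [hφ, hψ] at h1 ⊢ <;> exact h1
    have hθC : θ ∈ div C := by
      rw [hagm.closure C]
      exact deduction (hagm.recovery C hCK hδK)
    have hθφ : θ ∈ div (Fm.neg φ) := hext ▸ hagm.conjOverlap A C ⟨hθA, hθC⟩
    refine ⟨[θ, m], by simp [hθφ, Set.mem_union], ?_⟩
    intro v hv
    have h1 := hv θ (by simp)
    have h2 := hv m (by simp)
    simp only [hθ, hδ, hC, hm, Fm.imp, Fm.conj, Fm.eval] at h1 h2 ⊢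
    simp only [Bool.not_or, Bool.not_not, Bool.and_eq_true, Bool.not_eq_true'] at h2
    simp [h2.1, h2.2] at h1
    exact h1
  · -- vacuity: K ⊆ div C, so δ ∈ div A ∩ div C
    have hδC : δ ∈ div C := hagm.vacuity C hCK hδK
    have hδφ : δ ∈ div (Fm.neg φ) := hext ▸ hagm.conjOverlap A C ⟨hδA, hδC⟩
    refine ⟨[δ, m], by simp [hδφ, Set.mem_union], ?_⟩
    intro v hv
    have h1 := hv δ (by simp)
    have h2 := hv m (by simp)
    simp only [hδ, hm, Fm.imp, Fm.conj, Fm.eval] at h1 h2 ⊢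
    simp only [Bool.not_or, Bool.not_not, Bool.and_eq_true, Bool.not_eq_true'] at h2
    simp [h2.1, h2.2] at h1
    exact h1
end

section
/- Let ÷ satisfy AGM postulates (K−1)–(K−8) on a consistent deductively closed K. If ¬(φ∧ψ) ∉ K÷¬φ, then K÷¬φ ⊆ K÷¬(φ∧ψ). -/
/-- if ¬(φ∧ψ) ∉ K÷¬φ then K÷¬φ ⊆ K÷¬(φ∧ψ). -/
theorem div_subset_of_not_mem (K : Set Fm) (hcons : Consistent K)
    (hclosed : K = Cn K) (div : Fm → Set Fm) (hagm : AGM K div)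
    (φ ψ : Fm) (h : Fm.neg (Fm.conj φ ψ) ∉ div (Fm.neg φ)) :
    div (Fm.neg φ) ⊆ div (Fm.neg (Fm.conj φ ψ)) := by
  have heq : div (Fm.neg φ) = div (Fm.conj (Fm.neg (Fm.conj φ ψ)) (Fm.neg φ)) := by
    apply hagm.extensionality
    intro v
    simp only [Fm.biimp, Fm.conj, Fm.imp, Fm.eval]
    cases Fm.eval v φ <;> cases Fm.eval v ψ <;> rfl
  rw [heq]
  exact hagm.conjInclusion _ _ (heq ▸ h)
end

section
/- Fix a model ⟨S, s@, 𝓑, f, V⟩ satisfying the frame conditions and let K = {φ : 𝓑(s@) ⊆ ‖φ‖}, with K÷φ defined for ‖¬φ‖ ≠ ∅ by ψ ∈ K÷φ iff 𝓑(s@) ⊆ ‖ψ‖ and ∀s ∈ 𝓑(s@), f(s,‖¬φ‖) ⊆ ‖ψ‖. Extend ÷ to all of Φ₀ by setting K÷'φ = K ∩ Cn(¬φ) when ‖¬φ‖ = ∅ and K÷'φ = K÷φ otherwise. Then ÷' satisfies all eight AGM postulates. -/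
open Classical in
/-- The extension of the semantically defined contraction to all formulas. -/
noncomputable def semDiv' (M : Model) (f : M.S → Set M.S → Set M.S) (φ : Fm) : Set Fm :=
  if (M.truth (Fm.neg φ)).Nonempty then semDiv M f φ
  else {ψ : Fm | M.B M.act ⊆ M.truth ψ} ∩ Cn {Fm.neg φ}


namespace SemDivAux

open Fm

open Classical in
/-- Valuation induced by a state. -/
noncomputable def Model.val (M : Model) (s : M.S) : ℕ → Bool := fun n => decide (s ∈ M.V n)

lemma truth_iff (M : Model) (φ : Fm) (s : M.S) :
    s ∈ M.truth φ ↔ Fm.eval (Model.val M s) φ = true := by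
  induction φ with
  | atom n => simp [Model.truth, Fm.eval, Model.val]
  | neg φ ih => simp [Model.truth, Fm.eval, ih]
  | disj φ ψ ih1 ih2 => simp [Model.truth, Fm.eval, ih1, ih2]

/-- Formulas true under all valuations satisfying `P`. -/
def TS (P : (ℕ → Bool) → Prop) : Set Fm := {ψ | ∀ v, P v → Fm.eval v ψ = true}

lemma subset_Cn (A : Set Fm) : A ⊆ Cn A := by
  intro ψ h
  exact ⟨[ψ], by simpa using h, by simp⟩

lemma Cn_TS (P : (ℕ → Bool) → Prop) : Cn (TS P) = TS P := by
  apply Set.Subset.antisymm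
  · rintro ψ ⟨l, hl, hv⟩ v hP
    exact hv v (fun φ hφ => hl φ hφ v hP)
  · exact subset_Cn _

lemma Cn_singleton (χ : Fm) : Cn {χ} = TS (fun v => Fm.eval v χ = true) := by
  apply Set.Subset.antisymm
  · rintro ψ ⟨l, hl, hv⟩ v hχ
    refine hv v (fun φ hφ => ?_)
    have : φ = χ := hl φ hφ
    rw [this]; exact hχ
  · intro ψ hψ
    exact ⟨[χ], by simp, fun v hv => hψ v (hv χ (by simp))⟩

lemma TS_inter (P Q : (ℕ → Bool) → Prop) :
    TS P ∩ TS Q = TS (fun v => P v ∨ Q v) := by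
  ext ψ
  constructor
  · rintro ⟨h1, h2⟩ v (h | h)
    exacts [h1 v h, h2 v h]
  · intro h
    exact ⟨fun v hv => h v (Or.inl hv), fun v hv => h v (Or.inr hv)⟩

lemma K_eq (M : Model) :
    {φ : Fm | M.B M.act ⊆ M.truth φ} = TS (fun v => ∃ s ∈ M.B M.act, v = Model.val M s) := by
  ext ψ
  constructor
  · rintro h v ⟨s, hs, rfl⟩
    exact (truth_iff M ψ s).1 (h hs)
  · intro h s hs
    exact (truth_iff M ψ s).2 (h _ ⟨s, hs, rfl⟩)

lemma semDiv_eq (M : Model) (f : M.S → Set M.S → Set M.S) (φ : Fm) :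
    semDiv M f φ = TS (fun v => (∃ s ∈ M.B M.act, v = Model.val M s) ∨
      ∃ s ∈ M.B M.act, ∃ t ∈ f s (M.truth (Fm.neg φ)), v = Model.val M t) := by
  ext ψ
  constructor
  · rintro ⟨h1, h2⟩ v (⟨s, hs, rfl⟩ | ⟨s, hs, t, ht, rfl⟩)
    · exact (truth_iff M ψ s).1 (h1 hs)
    · exact (truth_iff M ψ t).1 (h2 s hs ht)
  · intro h
    constructor
    · intro s hs
      exact (truth_iff M ψ s).2 (h _ (Or.inl ⟨s, hs, rfl⟩))
    · intro s hs t ht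
      exact (truth_iff M ψ t).2 (h _ (Or.inr ⟨s, hs, t, ht, rfl⟩))

lemma eval_biimp_iff (v : ℕ → Bool) (φ ψ : Fm) :
    Fm.eval v (Fm.biimp φ ψ) = true ↔ Fm.eval v φ = Fm.eval v ψ := by
  simp only [Fm.biimp, Fm.conj, Fm.imp, Fm.eval]
  cases h1 : Fm.eval v φ <;> cases h2 : Fm.eval v ψ <;> simp

lemma truth_congr (M : Model) {φ ψ : Fm} (h : ∀ v, Fm.eval v φ = Fm.eval v ψ) :
    M.truth φ = M.truth ψ := by
  ext s
  rw [truth_iff, truth_iff, h]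

lemma truth_neg_conj (M : Model) (φ ψ : Fm) :
    M.truth (Fm.neg (Fm.conj φ ψ)) = M.truth (Fm.neg φ) ∪ M.truth (Fm.neg ψ) := by
  simp [Fm.conj, Model.truth, compl_compl, Set.compl_inter]

end SemDivAux

namespace SemDivAux

lemma truth_neg (M : Model) (φ : Fm) : M.truth (Fm.neg φ) = (M.truth φ)ᶜ := rfl

lemma mem_truth_neg (M : Model) (φ : Fm) (s : M.S) :
    s ∈ M.truth (Fm.neg φ) ↔ s ∉ M.truth φ := Iff.rfl

lemma truth_imp (M : Model) (φ ψ : Fm) :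
    M.truth (Fm.imp φ ψ) = (M.truth φ)ᶜ ∪ M.truth ψ := rfl

lemma semDiv'_pos (M : Model) (f : M.S → Set M.S → Set M.S) (φ : Fm)
    (h : (M.truth (Fm.neg φ)).Nonempty) : semDiv' M f φ = semDiv M f φ := by
  rw [semDiv', if_pos h]

lemma semDiv'_neg (M : Model) (f : M.S → Set M.S → Set M.S) (φ : Fm)
    (h : ¬ (M.truth (Fm.neg φ)).Nonempty) :
    semDiv' M f φ = {ψ : Fm | M.B M.act ⊆ M.truth ψ} ∩ Cn {Fm.neg φ} := by
  rw [semDiv', if_neg h]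

end SemDivAux

open SemDivAux

/-- the extended semantic contraction satisfies all eight AGM postulates. -/
theorem semDiv'_AGM (M : Model) (f : M.S → Set M.S → Set M.S)
    (hf : FrameConditions M f) :
    AGM {φ : Fm | M.B M.act ⊆ M.truth φ} (semDiv' M f) := by
  obtain ⟨ha, hb, hc, hd, he⟩ := hf
  refine ⟨?_, ?_, ?_, ?_, ?_, ?_, ?_, ?_⟩
  -- closure
  · intro φ
    by_cases h : (M.truth (Fm.neg φ)).Nonempty
    · rw [semDiv'_pos M f φ h, semDiv_eq, Cn_TS]
    · rw [semDiv'_neg M f φ h, K_eq, Cn_singleton, TS_inter, Cn_TS]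
  -- inclusion
  · intro φ ψ hψ
    by_cases h : (M.truth (Fm.neg φ)).Nonempty
    · rw [semDiv'_pos M f φ h] at hψ; exact hψ.1
    · rw [semDiv'_neg M f φ h] at hψ; exact hψ.1
  -- vacuity
  · intro φ hφK ψ hψ
    have hK : ¬ M.B M.act ⊆ M.truth φ := hφK
    rw [Set.not_subset] at hK
    obtain ⟨s0, hs0B, hs0⟩ := hK
    have hne : (M.truth (Fm.neg φ)).Nonempty := ⟨s0, hs0⟩
    rw [semDiv'_pos M f φ hne]
    refine ⟨hψ, fun s hs t ht => ?_⟩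
    exact hψ ((hc s hs _ hne ⟨s0, hs0B, hs0⟩ ht).1)
  -- success
  · intro φ hT
    by_cases h : (M.truth (Fm.neg φ)).Nonempty
    · rw [semDiv'_pos M f φ h]
      rintro ⟨h1, h2⟩
      obtain ⟨s, hsB⟩ := M.serial M.act
      obtain ⟨⟨t, ht⟩, hsub⟩ := ha s hsB _ h
      exact absurd (h2 s hsB ht) (hsub ht)
    · rw [semDiv'_neg M f φ h]
      rintro ⟨-, hCn⟩
      rw [Cn_singleton] at hCn
      apply hT
      intro v
      by_cases hv : Fm.eval v φ = true
      · exact hv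
      · have hv' : Fm.eval v φ = false := by simpa using hv
        exact absurd (hCn v (by simp [Fm.eval, hv'])) (by simp [hv'])
  -- recovery
  · intro φ hφ ψ hψ
    refine ⟨[Fm.imp φ ψ, φ], ?_, ?_⟩
    · intro χ hχ
      rcases List.mem_pair.mp hχ with rfl | rfl
      · left
        by_cases h : (M.truth (Fm.neg φ)).Nonempty
        · rw [semDiv'_pos M f φ h]
          refine ⟨fun s hs => ?_, fun s hs t ht => ?_⟩
          · rw [truth_imp]; exact Or.inr (hψ hs)
          · rw [truth_imp]; exact Or.inl ((ha s hs _ h).2 ht)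
        · rw [semDiv'_neg M f φ h]
          refine ⟨fun s hs => ?_, ?_⟩
          · rw [truth_imp]; exact Or.inr (hψ hs)
          · rw [Cn_singleton]
            intro v hv
            simp only [Fm.eval] at hv
            simp [Fm.imp, Fm.eval, hv]
      · right; rfl
    · intro v hv
      have h1 := hv (Fm.imp φ ψ) (by simp)
      have h2 := hv φ (by simp)
      simpa [Fm.imp, Fm.eval, h2] using h1
  -- extensionality
  · intro φ ψ ht
    have hev : ∀ v, Fm.eval v φ = Fm.eval v ψ := fun v => (eval_biimp_iff v φ ψ).1 (ht v)
    have hevn : ∀ v, Fm.eval v (Fm.neg φ) = Fm.eval v (Fm.neg ψ) := by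
      intro v; simp [Fm.eval, hev v]
    have htr : M.truth (Fm.neg φ) = M.truth (Fm.neg ψ) := truth_congr M hevn
    by_cases h : (M.truth (Fm.neg φ)).Nonempty
    · rw [semDiv'_pos M f φ h, semDiv'_pos M f ψ (htr ▸ h)]
      unfold semDiv
      rw [htr]
    · rw [semDiv'_neg M f φ h, semDiv'_neg M f ψ (by rw [← htr]; exact h)]
      rw [Cn_singleton, Cn_singleton]
      have : (fun v => Fm.eval v (Fm.neg φ) = true) = (fun v => Fm.eval v (Fm.neg ψ) = true) :=
        funext fun v => by rw [hevn v]
      rw [this]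
  -- conjunctive overlap
  · intro φ ψ χ hχ
    obtain ⟨hχφ, hχψ⟩ := hχ
    have hun := truth_neg_conj M φ ψ
    by_cases hφn : (M.truth (Fm.neg φ)).Nonempty <;>
      by_cases hψn : (M.truth (Fm.neg ψ)).Nonempty
    · -- both nonempty
      have hGn : (M.truth (Fm.neg (Fm.conj φ ψ))).Nonempty := by
        obtain ⟨x, hx⟩ := hφn; rw [hun]; exact ⟨x, Or.inl hx⟩
      rw [semDiv'_pos M f φ hφn] at hχφ
      rw [semDiv'_pos M f ψ hψn] at hχψ
      rw [semDiv'_pos M f _ hGn]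
      refine ⟨hχφ.1, fun s hs t ht => ?_⟩
      have htG := (ha s hs _ hGn).2 ht
      rw [hun] at htG
      rcases htG with h1 | h1
      · have h2 : t ∈ f s (M.truth (Fm.neg (Fm.conj φ ψ)) ∩ M.truth (Fm.neg φ)) :=
          hd s hs _ _ hGn ⟨ht, h1⟩
        rw [hun, Set.union_inter_cancel_left] at h2
        exact hχφ.2 s hs h2
      · have h2 : t ∈ f s (M.truth (Fm.neg (Fm.conj φ ψ)) ∩ M.truth (Fm.neg ψ)) :=
          hd s hs _ _ hGn ⟨ht, h1⟩
        rw [hun, Set.union_inter_cancel_right] at h2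
        exact hχψ.2 s hs h2
    · -- φ nonempty, ψ empty
      have hEψ : M.truth (Fm.neg ψ) = ∅ := Set.not_nonempty_iff_eq_empty.1 hψn
      have hG : M.truth (Fm.neg (Fm.conj φ ψ)) = M.truth (Fm.neg φ) := by
        rw [hun, hEψ, Set.union_empty]
      have hGn : (M.truth (Fm.neg (Fm.conj φ ψ))).Nonempty := by rw [hG]; exact hφn
      rw [semDiv'_pos M f φ hφn] at hχφ
      rw [semDiv'_pos M f _ hGn]
      refine ⟨hχφ.1, fun s hs => ?_⟩
      rw [hG]; exact hχφ.2 s hs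
    · -- φ empty, ψ nonempty
      have hEφ : M.truth (Fm.neg φ) = ∅ := Set.not_nonempty_iff_eq_empty.1 hφn
      have hG : M.truth (Fm.neg (Fm.conj φ ψ)) = M.truth (Fm.neg ψ) := by
        rw [hun, hEφ, Set.empty_union]
      have hGn : (M.truth (Fm.neg (Fm.conj φ ψ))).Nonempty := by rw [hG]; exact hψn
      rw [semDiv'_pos M f ψ hψn] at hχψ
      rw [semDiv'_pos M f _ hGn]
      refine ⟨hχψ.1, fun s hs => ?_⟩
      rw [hG]; exact hχψ.2 s hs
    · -- both empty
      have hEφ : M.truth (Fm.neg φ) = ∅ := Set.not_nonempty_iff_eq_empty.1 hφn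
      have hEψ : M.truth (Fm.neg ψ) = ∅ := Set.not_nonempty_iff_eq_empty.1 hψn
      have hG : M.truth (Fm.neg (Fm.conj φ ψ)) = ∅ := by
        rw [hun, hEφ, hEψ, Set.union_empty]
      have hGn : ¬ (M.truth (Fm.neg (Fm.conj φ ψ))).Nonempty := by
        rw [hG]; exact Set.not_nonempty_empty
      rw [semDiv'_neg M f φ hφn] at hχφ
      rw [semDiv'_neg M f ψ hψn] at hχψ
      rw [semDiv'_neg M f _ hGn]
      refine ⟨hχφ.1, ?_⟩
      rw [Cn_singleton] at hχφ hχψ ⊢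
      intro v hv
      simp only [Fm.conj, Fm.eval, Bool.not_not, Bool.or_eq_true, Bool.not_eq_true'] at hv
      rcases hv with h | h
      · exact hχφ.2 v (by simp [Fm.eval, h])
      · exact hχψ.2 v (by simp [Fm.eval, h])
  -- conjunctive inclusion
  · intro φ ψ hφnot χ hχ
    have hun := truth_neg_conj M φ ψ
    by_cases hφn : (M.truth (Fm.neg φ)).Nonempty
    · by_cases hψn : (M.truth (Fm.neg ψ)).Nonempty
      · -- both nonempty: main case
        have hGn : (M.truth (Fm.neg (Fm.conj φ ψ))).Nonempty := by
          obtain ⟨x, hx⟩ := hφn; rw [hun]; exact ⟨x, Or.inl hx⟩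
        rw [semDiv'_pos M f _ hGn] at hφnot hχ
        rw [semDiv'_pos M f φ hφn]
        by_cases hK : M.B M.act ⊆ M.truth φ
        · have hex : ∃ s0 ∈ M.B M.act,
              ¬ (f s0 (M.truth (Fm.neg (Fm.conj φ ψ))) ⊆ M.truth φ) := by
            by_contra hcon
            push_neg at hcon
            exact hφnot ⟨hK, hcon⟩
          obtain ⟨s0, hs0B, hs0⟩ := hex
          rw [Set.not_subset] at hs0
          obtain ⟨t0, ht0f, ht0⟩ := hs0
          have hBne : {s | s ∈ M.B M.act ∧
              (f s (M.truth (Fm.neg (Fm.conj φ ψ))) ∩ M.truth (Fm.neg φ)).Nonempty}.Nonempty :=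
            ⟨s0, hs0B, ⟨t0, ht0f, ht0⟩⟩
          obtain ⟨h1, h2⟩ := he _ (M.truth (Fm.neg φ)) hGn hBne
          have hGE : M.truth (Fm.neg (Fm.conj φ ψ)) ∩ M.truth (Fm.neg φ)
              = M.truth (Fm.neg φ) := by
            rw [hun, Set.union_inter_cancel_left]
          refine ⟨hχ.1, fun s hs t ht => ?_⟩
          by_cases hsn : (f s (M.truth (Fm.neg (Fm.conj φ ψ))) ∩ M.truth (Fm.neg φ)).Nonempty
          · have h3 := h1 s hs hsn
            rw [hGE] at h3
            exact hχ.2 s hs (h3 ht).1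
          · obtain ⟨u, huB, hune, husub⟩ := h2 s hs hsn
            rw [hGE] at husub
            have h1u := h1 u huB hune
            rw [hGE] at h1u
            exact hχ.2 u huB (h1u (husub ht)).1
        · have hK' := hK
          rw [Set.not_subset] at hK'
          obtain ⟨s0, hs0B, hs0⟩ := hK'
          refine ⟨hχ.1, fun s hs t ht => hχ.1 (hc s hs _ hφn ⟨s0, hs0B, hs0⟩ ht).1⟩
      · -- ψ empty: same truth set
        have hEψ : M.truth (Fm.neg ψ) = ∅ := Set.not_nonempty_iff_eq_empty.1 hψn
        have hG : M.truth (Fm.neg (Fm.conj φ ψ)) = M.truth (Fm.neg φ) := by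
          rw [hun, hEψ, Set.union_empty]
        have hGn : (M.truth (Fm.neg (Fm.conj φ ψ))).Nonempty := by rw [hG]; exact hφn
        rw [semDiv'_pos M f _ hGn] at hχ
        rw [semDiv'_pos M f φ hφn]
        obtain ⟨h1, h2⟩ := hχ
        refine ⟨h1, fun s hs => ?_⟩
        rw [← hG]
        exact h2 s hs
    · have hEφ : M.truth (Fm.neg φ) = ∅ := Set.not_nonempty_iff_eq_empty.1 hφn
      have huniv : M.truth φ = Set.univ := by
        rw [truth_neg] at hEφ
        exact Set.compl_empty_iff.1 hEφ
      by_cases hψn : (M.truth (Fm.neg ψ)).Nonempty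
      · -- φ ∈ div (conj φ ψ), contradicting hφnot
        exfalso
        apply hφnot
        have hGn : (M.truth (Fm.neg (Fm.conj φ ψ))).Nonempty := by
          obtain ⟨x, hx⟩ := hψn; rw [hun]; exact ⟨x, Or.inr hx⟩
        rw [semDiv'_pos M f _ hGn]
        exact ⟨by rw [huniv]; exact Set.subset_univ _,
          fun s hs t ht => by rw [huniv]; exact Set.mem_univ t⟩
      · -- both empty
        have hEψ : M.truth (Fm.neg ψ) = ∅ := Set.not_nonempty_iff_eq_empty.1 hψn
        have hGn : ¬ (M.truth (Fm.neg (Fm.conj φ ψ))).Nonempty := by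
          rw [hun, hEφ, hEψ, Set.union_empty]
          exact Set.not_nonempty_empty
        rw [semDiv'_neg M f _ hGn] at hχ
        rw [semDiv'_neg M f φ hφn]
        refine ⟨hχ.1, ?_⟩
        rw [Cn_singleton] at hχ ⊢
        intro v hv
        apply hχ.2 v
        simp only [Fm.eval, Bool.not_eq_true', Bool.not_eq_false] at hv
        simp [Fm.conj, Fm.eval, hv]
end
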